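/- arXiv:1202.3428 — 2 statements merged into one kernel-verified Lean document; each statement's English description precedes it below -/
import Mathlib

section
/- Let N be coprime to b>1 and q a prime divisor of both |b|_N and N. Then N has the Midy property for b and q if and only if q^2 does not divide N and ν_q(|b|_p) = ν_q(|b|_N) for every prime p ≠ q dividing N. -/
/-!
Write `r = |b|_N` and `k = r / q`. A prime `p ∣ N` divides `b^k - 1` iff `|b|_p ∣ k`, and since
`|b|_p ∣ r` this fails exactly when `ν_q(|b|_p) = ν_q(r)`. The prime `q` itself always divides
`b^k - 1`, because `|b|_q ∣ q - 1` is prime to `q`. Hence the Midy condition at `q` reads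
`ν_q(N) ≤ 1`, and at a prime `p ≠ q` (where `ν_p(q) = 0`) it says that `p ∤ b^k - 1`.
-/

/-- The multiplicative order of `b` modulo `N`. -/
noncomputable def ord (b N : ℕ) : ℕ := orderOf (b : ZMod N)

/-- `N` has the Midy property for base `b` and `d` (where `|b|_N = k·d`):
`ν_p(N) ≤ ν_p(d)` for all primes `p` dividing `gcd(b^k − 1, N)`. -/
def HasMidy (b N d : ℕ) : Prop :=
  ∀ p : ℕ, p.Prime → p ∣ Nat.gcd (b ^ (ord b N / d) - 1) N →
    padicValNat p N ≤ padicValNat p d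

lemma dvd_div_prime_iff_padicValNat_lt {d r q : ℕ} (hq : q.Prime) (hr : r ≠ 0) (hqr : q ∣ r)
    (hdr : d ∣ r) : d ∣ r / q ↔ padicValNat q d < padicValNat q r := by
  have hd : d ≠ 0 := ne_zero_of_dvd_ne_zero hr hdr
  have hrq : r / q ≠ 0 := (Nat.div_pos (Nat.le_of_dvd (Nat.pos_of_ne_zero hr) hqr) hq.pos).ne'
  have hle := (Nat.factorization_le_iff_dvd hd hr).2 hdr
  have hq1 : 0 < r.factorization q := hq.factorization_pos_of_dvd hr hqr
  rw [← Nat.factorization_le_iff_dvd hd hrq, Nat.factorization_div hqr, hq.factorization,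
    ← Nat.factorization_def d hq, ← Nat.factorization_def r hq]
  constructor
  · intro h
    have := h q
    simp only [Finsupp.coe_tsub, Pi.sub_apply, Finsupp.single_eq_same] at this
    omega
  · intro h p
    obtain rfl | hpq := eq_or_ne p q
    · simp only [Finsupp.coe_tsub, Pi.sub_apply, Finsupp.single_eq_same]
      omega
    · simpa [Finsupp.single_apply, hpq.symm] using hle p

lemma ord_ne_zero {b N : ℕ} (hco : N.Coprime b) : ord b N ≠ 0 :=
  (((ZMod.isUnit_iff_coprime b N).2 hco.symm).isOfFinOrder).orderOf_pos.ne'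

lemma ord_dvd_ord_of_dvd {b p N : ℕ} (h : p ∣ N) : ord b p ∣ ord b N := by
  simpa [ord] using orderOf_map_dvd (ZMod.castHom h (ZMod p)).toMonoidHom (b : ZMod N)

lemma dvd_pow_sub_one_iff_ord_dvd {b p k : ℕ} (hb : b ≠ 0) : p ∣ b ^ k - 1 ↔ ord b p ∣ k := by
  rw [ord, orderOf_dvd_iff_pow_eq_one, ← ZMod.natCast_eq_zero_iff,
    Nat.cast_sub (Nat.one_le_pow _ _ (Nat.pos_of_ne_zero hb))]
  push_cast
  exact sub_eq_zero

lemma not_dvd_ord_self {b q : ℕ} (hq : q.Prime) (hqb : ¬ q ∣ b) : ¬ q ∣ ord b q := by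
  have : Fact q.Prime := ⟨hq⟩
  have hdvd : ord b q ∣ q - 1 :=
    ZMod.orderOf_dvd_card_sub_one (by rwa [Ne, ZMod.natCast_eq_zero_iff])
  exact fun h => (Nat.sub_lt hq.pos one_pos).not_ge
    (Nat.le_of_dvd (Nat.sub_pos_of_lt hq.one_lt) (h.trans hdvd))

lemma prime_dvd_pow_ord_div_sub_one {b N q : ℕ} (hq : q.Prime) (hqN : q ∣ N) (hqb : ¬ q ∣ b)
    (hqr : q ∣ ord b N) : q ∣ b ^ (ord b N / q) - 1 := by
  have hb : b ≠ 0 := by rintro rfl; exact hqb (dvd_zero q)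
  rw [dvd_pow_sub_one_iff_ord_dvd hb]
  refine (hq.coprime_iff_not_dvd.2 (not_dvd_ord_self hq hqb)).symm.dvd_of_dvd_mul_right ?_
  rw [Nat.div_mul_cancel hqr]
  exact ord_dvd_ord_of_dvd hqN

lemma padicValNat_ord_eq_iff_not_dvd {b p N q : ℕ} (hq : q.Prime) (hb : b ≠ 0)
    (hco : N.Coprime b) (hqr : q ∣ ord b N) (hpN : p ∣ N) :
    padicValNat q (ord b p) = padicValNat q (ord b N) ↔ ¬ p ∣ b ^ (ord b N / q) - 1 := by
  have : Fact q.Prime := ⟨hq⟩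
  have hr := ord_ne_zero hco
  have hpr := ord_dvd_ord_of_dvd (b := b) hpN
  have hle : padicValNat q (ord b p) ≤ padicValNat q (ord b N) :=
    (padicValNat_dvd_iff_le hr).1 (pow_padicValNat_dvd.trans hpr)
  rw [dvd_pow_sub_one_iff_ord_dvd hb, dvd_div_prime_iff_padicValNat_lt hq hr hqr hpr]
  omega

theorem stmt3_general (b N q : ℕ) (hN : 0 < N) (hco : Nat.Coprime N b)
    (hq : q.Prime) (hqo : q ∣ ord b N) (hqN : q ∣ N) :
    HasMidy b N q ↔
      (¬ q ^ 2 ∣ N ∧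
        ∀ p : ℕ, p.Prime → p ∣ N → p ≠ q →
          padicValNat q (ord b p) = padicValNat q (ord b N)) := by
  have : Fact q.Prime := ⟨hq⟩
  have hqb : ¬ q ∣ b := fun h => hq.not_dvd_one (hco ▸ Nat.dvd_gcd hqN h)
  have hb : b ≠ 0 := by rintro rfl; exact hqb (dvd_zero q)
  have hsq : ¬ q ^ 2 ∣ N ↔ padicValNat q N ≤ 1 := by
    rw [padicValNat_dvd_iff_le hN.ne']
    omega
  have hqk := prime_dvd_pow_ord_div_sub_one hq hqN hqb hqo
  simp only [HasMidy, Nat.dvd_gcd_iff]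
  constructor
  · intro H
    refine ⟨hsq.2 (by simpa [padicValNat.self hq.one_lt] using H q hq ⟨hqk, hqN⟩),
      fun p hp hpN hpq => (padicValNat_ord_eq_iff_not_dvd hq hb hco hqo hpN).2 fun hpk => ?_⟩
    have : Fact p.Prime := ⟨hp⟩
    have hvp := H p hp ⟨hpk, hpN⟩
    rw [padicValNat_primes hpq] at hvp
    exact (one_le_padicValNat_of_dvd hN.ne' hpN).not_gt (by omega)
  · rintro ⟨hsqN, hval⟩ p hp ⟨hpk, hpN⟩
    obtain rfl | hpq := eq_or_ne p q
    · rw [padicValNat.self hp.one_lt]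
      exact hsq.1 hsqN
    · exact absurd hpk ((padicValNat_ord_eq_iff_not_dvd hq hb hco hqo hpN).1 (hval p hp hpN hpq))

theorem stmt3 (b N q : ℕ) (hb : 1 < b) (hN : 0 < N) (hco : Nat.Coprime N b)
    (hq : q.Prime) (hqo : q ∣ ord b N) (hqN : q ∣ N) :
    HasMidy b N q ↔
      (¬ q ^ 2 ∣ N ∧
        ∀ p : ℕ, p.Prime → p ∣ N → p ≠ q →
          padicValNat q (ord b p) = padicValNat q (ord b N)) :=
  stmt3_general b N q hN hco hq hqo hqN
end

section
/- Let N be coprime to b>1 with gcd(N, |b|_N) = r a prime. Then N has the Midy property for b and every divisor d>1 of |b|_N if and only if N = r·p_1^{e_1}···p_l^{e_l} with r, p_i distinct primes and |b|_N = |b|_{p_i} = r^s·|b|_r for all i, for some positive integer s. -/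
section Order

variable {b : ℕ}

lemma ord_pos {N : ℕ} (hco : N.Coprime b) : 0 < ord b N := by
  rw [ord, ← ZMod.coe_unitOfCoprime b hco.symm, orderOf_units]
  exact orderOf_pos _

lemma ord_dvd_ord {m N : ℕ} (h : m ∣ N) : ord b m ∣ ord b N := by
  apply orderOf_dvd_of_pow_eq_one
  have hpow : (b : ZMod N) ^ ord b N = 1 := pow_orderOf_eq_one _
  simpa only [map_pow, map_natCast, map_one] using congrArg (ZMod.castHom h (ZMod m)) hpow

lemma dvd_pow_sub_one_iff (hb : 1 ≤ b) (n k : ℕ) : n ∣ b ^ k - 1 ↔ ord b n ∣ k := by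
  rw [← Nat.modEq_iff_dvd' (Nat.one_le_pow _ _ hb), ord, orderOf_dvd_iff_pow_eq_one,
    Nat.ModEq.comm, ← ZMod.natCast_eq_natCast_iff]
  push_cast
  rfl

lemma not_dvd_ord_self_s7 {r : ℕ} (hr : r.Prime) (h : ¬ r ∣ b) : ¬ r ∣ ord b r := by
  have : Fact r.Prime := ⟨hr⟩
  have hdvd : ord b r ∣ r - 1 := ZMod.orderOf_dvd_card_sub_one (by
    simpa [Ne, ZMod.natCast_eq_zero_iff] using h)
  intro hc
  have := hr.two_le
  have := Nat.le_of_dvd (by omega) (hc.trans hdvd)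
  omega

end Order

section Midy

variable {b N : ℕ}

lemma HasMidy.padicValNat_le {d p : ℕ} (hM : HasMidy b N d) (hb : 1 ≤ b) (hp : p.Prime)
    (hpN : p ∣ N) (hpd : ord b p ∣ ord b N / d) : padicValNat p N ≤ padicValNat p d :=
  hM p hp (Nat.dvd_gcd ((dvd_pow_sub_one_iff hb p _).mpr hpd) hpN)

lemma HasMidy.eq_of_ord_mul_dvd {p q : ℕ} (hM : HasMidy b N q) (hb : 1 ≤ b) (hN : N ≠ 0)
    (hp : p.Prime) (hq : q.Prime) (hpN : p ∣ N) (hqp : ord b p * q ∣ ord b N) : p = q := by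
  have : Fact p.Prime := ⟨hp⟩
  have hle := hM.padicValNat_le hb hp hpN (Nat.dvd_div_of_mul_dvd (by rwa [mul_comm]))
  have hpq : p ∣ q := by
    by_contra hpq
    rw [padicValNat.eq_zero_of_not_dvd hpq] at hle
    have := one_le_padicValNat_of_dvd hN hpN
    omega
  exact (Nat.prime_dvd_prime_iff_eq hp hq).mp hpq

lemma not_sq_dvd_of_forall_hasMidy (hM : ∀ d, 1 < d → d ∣ ord b N → HasMidy b N d)
    (hb : 1 ≤ b) (hN : N ≠ 0) {r : ℕ} (hr : r.Prime) (hrN : r ∣ N) (hre : r ∣ ord b N)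
    (hror : ¬ r ∣ ord b r) : ¬ r ^ 2 ∣ N := by
  have : Fact r.Prime := ⟨hr⟩
  have hrr : r * ord b r ∣ ord b N :=
    ((Nat.Prime.coprime_iff_not_dvd hr).mpr hror).mul_dvd_of_dvd_of_dvd hre (ord_dvd_ord hrN)
  have hle := (hM r hr.one_lt hre).padicValNat_le hb hr hrN (Nat.dvd_div_of_mul_dvd hrr)
  rw [padicValNat.self hr.one_lt] at hle
  rw [padicValNat_dvd_iff_le hN]
  omega

lemma ord_eq_of_forall_hasMidy (hM : ∀ d, 1 < d → d ∣ ord b N → HasMidy b N d)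
    (hb : 1 ≤ b) (hN : N ≠ 0) {p : ℕ} (hp : p.Prime) (hpN : p ∣ N) (hpe : ¬ p ∣ ord b N) :
    ord b N = ord b p := by
  have hdvd : ord b p ∣ ord b N := ord_dvd_ord hpN
  by_contra hne
  obtain ⟨q, hq, hqe⟩ := Nat.exists_prime_and_dvd fun h =>
    hne (Nat.eq_of_dvd_of_div_eq_one hdvd h).symm
  have hqp : ord b p * q ∣ ord b N := Nat.mul_dvd_of_dvd_div hdvd hqe
  have hpq := (hM q hq.one_lt (dvd_of_mul_left_dvd hqp)).eq_of_ord_mul_dvd hb hN hp hq hpN hqp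
  exact hpe (hpq ▸ dvd_of_mul_left_dvd hqp)

lemma exists_eq_pow_mul_ord_of_forall_hasMidy (hM : ∀ d, 1 < d → d ∣ ord b N → HasMidy b N d)
    (hb : 1 ≤ b) (hN : N ≠ 0) (hco : N.Coprime b) {r : ℕ} (hr : r.Prime) (hrN : r ∣ N) :
    ∃ s, ord b N = r ^ s * ord b r := by
  have hdvd : ord b r ∣ ord b N := ord_dvd_ord hrN
  have hne : ord b N / ord b r ≠ 0 :=
    (Nat.div_pos (Nat.le_of_dvd (ord_pos hco) hdvd) (ord_pos (hco.coprime_dvd_left hrN))).ne'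
  refine ⟨_, (Nat.div_mul_cancel hdvd).symm.trans
    (congrArg (· * ord b r) (Nat.eq_prime_pow_of_unique_prime_dvd hne ?_))⟩
  intro q hq hqe
  have hqr : ord b r * q ∣ ord b N := Nat.mul_dvd_of_dvd_div hdvd hqe
  exact ((hM q hq.one_lt (dvd_of_mul_left_dvd hqr)).eq_of_ord_mul_dvd hb hN hr hq hrN hqr).symm

end Midy

lemma hasMidy_of_eq_pow_mul_ord {b N r s d : ℕ} (hb : 1 ≤ b) (hN : N ≠ 0) (hco : N.Coprime b)
    (hr : r.Prime) (hr2 : ¬ r ^ 2 ∣ N) (hs : ord b N = r ^ s * ord b r)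
    (hordp : ∀ p, p.Prime → p ∣ N → p ≠ r → ord b N = ord b p) (hd : 1 < d)
    (hde : d ∣ ord b N) : HasMidy b N d := by
  intro p hp hpg
  have hpN : p ∣ N := hpg.trans (Nat.gcd_dvd_right _ _)
  have hpd : ord b p ∣ ord b N / d :=
    (dvd_pow_sub_one_iff hb p _).mp (hpg.trans (Nat.gcd_dvd_left _ _))
  obtain rfl | hpr := eq_or_ne p r
  · have : Fact p.Prime := ⟨hp⟩
    have hdp : d ∣ p ^ s := by
      have hmul := Nat.mul_dvd_of_dvd_div hde hpd
      rw [hs] at hmul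
      exact Nat.dvd_of_mul_dvd_mul_right (ord_pos (hco.coprime_dvd_left hpN)) hmul
    have hpd' : p ∣ d := by
      obtain ⟨k, -, rfl⟩ := (Nat.dvd_prime_pow hp).mp hdp
      exact dvd_pow_self p (by rintro rfl; simp at hd)
    have hvN : padicValNat p N ≤ 1 := by
      by_contra
      exact hr2 ((padicValNat_dvd_iff_le hN).mpr (by omega))
    have := one_le_padicValNat_of_dvd (by omega) hpd'
    omega
  · have he := ord_pos hco
    have hle := Nat.le_of_dvd (Nat.div_pos (Nat.le_of_dvd he hde) (by omega)) hpd
    rw [← hordp p hp hpN hpr] at hle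
    have := Nat.div_lt_self he hd
    omega

theorem stmt7 (b N r : ℕ) (hb : 1 < b) (hN : 0 < N) (hco : Nat.Coprime N b)
    (hr : r.Prime) (hg : Nat.gcd N (ord b N) = r) :
    (∀ d : ℕ, 1 < d → d ∣ ord b N → HasMidy b N d) ↔
      (r ∣ N ∧ ¬ r ^ 2 ∣ N ∧
        ∃ s : ℕ, 1 ≤ s ∧
          (∀ p : ℕ, p.Prime → p ∣ N → p ≠ r → ord b N = ord b p) ∧
            ord b N = r ^ s * ord b r) := by
  have hrN : r ∣ N := hg ▸ Nat.gcd_dvd_left N (ord b N)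
  have hre : r ∣ ord b N := hg ▸ Nat.gcd_dvd_right N (ord b N)
  have hror : ¬ r ∣ ord b r :=
    not_dvd_ord_self_s7 hr ((Nat.Prime.coprime_iff_not_dvd hr).mp (hco.coprime_dvd_left hrN))
  constructor
  · intro hM
    obtain ⟨s, hs⟩ := exists_eq_pow_mul_ord_of_forall_hasMidy hM hb.le hN.ne' hco hr hrN
    refine ⟨hrN, not_sq_dvd_of_forall_hasMidy hM hb.le hN.ne' hr hrN hre hror, s, ?_,
      fun p hp hpN hpr => ord_eq_of_forall_hasMidy hM hb.le hN.ne' hp hpN fun hpe => ?_, hs⟩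
    · refine Nat.one_le_iff_ne_zero.mpr fun hs0 => hror ?_
      rwa [hs, hs0, pow_zero, one_mul] at hre
    · exact hpr ((Nat.prime_dvd_prime_iff_eq hp hr).mp (hg ▸ Nat.dvd_gcd hpN hpe))
  · rintro ⟨-, hr2, s, -, hordp, hs⟩ d hd hde
    exact hasMidy_of_eq_pow_mul_ord hb.le hN.ne' hco hr hr2 hs hordp hd hde
end
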